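/- arXiv:2404.15169 — 6 statements merged into one kernel-verified Lean document; each statement's English description precedes it below -/
import Mathlib

section
/- Let Cl(p,q,r) be a Clifford algebra with generators e_1,…,e_n satisfying e_a e_b + e_b e_a = 2η_{ab}, where η is diagonal. If X lies in the subalgebra generated by the null generators (those with η_{aa}=0) and X is homogeneous of even exterior degree k, then X commutes with every element of the grade-m subspace for every m; if both k and m are odd, then α(X)·V = V·X for all V in the grade-m subspace, where α is the grade involution. -/
/-!
A null generator `e_i` is orthogonal to every vector, itself included, so it anticommutes with
every generator. Hence a product of `k` null generators and a product of `m` generators commute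
up to the sign `(-1)^(k m)`, and by bilinearity so do the spans `Λ^k_r` and `Cl^m(p,q,r)`. The
grade involution acts on `Λ^k_r` as `(-1)^k`, which absorbs the sign when `k` and `m` are odd.
-/

open CliffordAlgebra

noncomputable section

/-- Diagonal weights: `p` entries `+1`, `q` entries `-1`, `r` entries `0`. -/
def cliffSig (p q : ℕ) (i : ℕ) : ℝ := if i < p then 1 else if i < p + q then -1 else 0

/-- The quadratic form of signature `(p, q, r)` on `ℝ^(p+q+r)`. -/
def Qf (p q r : ℕ) : QuadraticForm ℝ (Fin (p + q + r) → ℝ) :=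
  QuadraticMap.weightedSumSquares ℝ (fun i : Fin (p + q + r) => cliffSig p q (i : ℕ))

/-- The `i`-th generator `e_i` of `Cl(p,q,r)`. -/
def gen (p q r : ℕ) (i : Fin (p + q + r)) : CliffordAlgebra (Qf p q r) :=
  ι (Qf p q r) (Pi.single i 1)

/-- The grade-`m` subspace `Cl^m(p,q,r)`: span of products of `m` distinct generators
with increasing indices. -/
def gradeSubspace (p q r m : ℕ) : Submodule ℝ (CliffordAlgebra (Qf p q r)) :=
  Submodule.span ℝ {x | ∃ l : List (Fin (p + q + r)),
    l.Chain' (· < ·) ∧ l.length = m ∧ x = (l.map (gen p q r)).prod}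

/-- `Λ_r`: the subalgebra generated by the `r` null generators. -/
def LambdaR (p q r : ℕ) : Subalgebra ℝ (CliffordAlgebra (Qf p q r)) :=
  Algebra.adjoin ℝ {x | ∃ i : Fin (p + q + r), p + q ≤ (i : ℕ) ∧ x = gen p q r i}

/-- `Λ^d_r`: the degree-`d` component of `Λ_r`. -/
def LambdaDeg (p q r d : ℕ) : Submodule ℝ (CliffordAlgebra (Qf p q r)) :=
  Submodule.span ℝ {x | ∃ l : List (Fin (p + q + r)),
    l.Chain' (· < ·) ∧ l.length = d ∧ (∀ i ∈ l, p + q ≤ (i : ℕ)) ∧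
    x = (l.map (gen p q r)).prod}

/-- The pseudoscalar `e_1 ⋯ e_n`. -/
def pseudoscalar (p q r : ℕ) : CliffordAlgebra (Qf p q r) :=
  ((List.finRange (p + q + r)).map (gen p q r)).prod

theorem QuadraticMap.weightedSumSquares_isOrtho_single {ι R : Type*} [Fintype ι]
    [DecidableEq ι] [CommRing R] {w : ι → R} {i : ι} (hi : w i = 0) (c : R) (y : ι → R) :
    (weightedSumSquares R w).IsOrtho (Pi.single i c) y := by
  rw [isOrtho_def, weightedSumSquares_apply, weightedSumSquares_apply,
    weightedSumSquares_apply, ← Finset.sum_add_distrib]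
  refine Finset.sum_congr rfl fun a _ => ?_
  rcases eq_or_ne a i with rfl | ha
  · simp [hi]
  · simp [ha]

theorem Submodule.mul_eq_smul_mul_of_mem_span {R A : Type*} [CommSemiring R] [Semiring A]
    [Algebra R A] {s t : Set A} {c : R} (h : ∀ x ∈ s, ∀ y ∈ t, x * y = c • (y * x))
    {x y : A} (hx : x ∈ span R s) (hy : y ∈ span R t) : x * y = c • (y * x) := by
  induction hx, hy using span_induction₂ with
  | mem_mem x y hx hy => exact h x hx y hy
  | zero_left => simp
  | zero_right => simp
  | add_left x y z _ _ _ hxz hyz => rw [add_mul, hxz, hyz, mul_add, smul_add]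
  | add_right x y z _ _ _ hxy hxz => rw [mul_add, hxy, hxz, add_mul, smul_add]
  | smul_left a x y _ _ hxy => rw [smul_mul_assoc, hxy, mul_smul_comm, smul_comm]
  | smul_right a x y _ _ hxy => rw [mul_smul_comm, hxy, smul_mul_assoc, smul_comm]

namespace CliffordAlgebra

variable {R M : Type*} [CommRing R] [AddCommGroup M] [Module R M] {Q : QuadraticForm R M}

theorem ι_mul_prod_map_ι_of_isOrtho {v : M} {l : List M} (h : ∀ w ∈ l, Q.IsOrtho v w) :
    ι Q v * (l.map (ι Q)).prod = (-1 : R) ^ l.length • ((l.map (ι Q)).prod * ι Q v) := by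
  induction l with
  | nil => simp
  | cons w l ih =>
    rw [List.map_cons, List.prod_cons, ← mul_assoc,
      ι_mul_ι_comm_of_isOrtho (h w List.mem_cons_self), neg_mul, mul_assoc,
      ih fun u hu => h u (List.mem_cons_of_mem w hu), List.length_cons, pow_succ, mul_smul_comm,
      mul_neg_one, neg_smul, ← mul_assoc]

theorem prod_map_ι_mul_prod_map_ι_of_isOrtho {l l' : List M}
    (h : ∀ v ∈ l, ∀ w ∈ l', Q.IsOrtho v w) :
    (l.map (ι Q)).prod * (l'.map (ι Q)).prod =
      (-1 : R) ^ (l.length * l'.length) • ((l'.map (ι Q)).prod * (l.map (ι Q)).prod) := by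
  induction l with
  | nil => simp
  | cons v l ih =>
    rw [List.map_cons, List.prod_cons, mul_assoc,
      ih fun u hu => h u (List.mem_cons_of_mem v hu), mul_smul_comm, ← mul_assoc,
      ι_mul_prod_map_ι_of_isOrtho (h v List.mem_cons_self), smul_mul_assoc, smul_smul,
      ← pow_add, mul_assoc, List.length_cons, add_one_mul, add_comm]

end CliffordAlgebra

theorem gen_eq (p q r : ℕ) : gen p q r = ι (Qf p q r) ∘ fun i => Pi.single i 1 := rfl

theorem Qf_isOrtho_single_of_null {p q r : ℕ} {i : Fin (p + q + r)} (hi : p + q ≤ (i : ℕ))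
    (y : Fin (p + q + r) → ℝ) : (Qf p q r).IsOrtho (Pi.single i 1) y :=
  QuadraticMap.weightedSumSquares_isOrtho_single
    (by simp [cliffSig, Nat.not_lt.mpr hi, Nat.not_lt.mpr ((Nat.le_add_right p q).trans hi)]) 1 y

theorem mul_eq_neg_one_pow_smul_mul_of_mem_lambdaDeg {p q r k m : ℕ}
    {X V : CliffordAlgebra (Qf p q r)} (hX : X ∈ LambdaDeg p q r k)
    (hV : V ∈ gradeSubspace p q r m) : X * V = (-1 : ℝ) ^ (k * m) • (V * X) := by
  refine Submodule.mul_eq_smul_mul_of_mem_span (R := ℝ) ?_ hX hV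
  rintro _ ⟨l, -, rfl, hnull, rfl⟩ _ ⟨l', -, rfl, rfl⟩
  simp only [gen_eq, ← List.map_map]
  rw [prod_map_ι_mul_prod_map_ι_of_isOrtho, List.length_map, List.length_map]
  simp only [List.mem_map]
  rintro _ ⟨i, hi, rfl⟩ _ -
  exact Qf_isOrtho_single_of_null (hnull i hi) _

theorem involute_of_mem_lambdaDeg {p q r k : ℕ} {X : CliffordAlgebra (Qf p q r)}
    (hX : X ∈ LambdaDeg p q r k) : involute X = (-1 : ℝ) ^ k • X := by
  refine LinearMap.eqOn_span (f := (involute : CliffordAlgebra (Qf p q r) →ₐ[ℝ] _).toLinearMap)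
    (g := (-1 : ℝ) ^ k • LinearMap.id) ?_ hX
  rintro _ ⟨l, -, rfl, -, rfl⟩
  simpa [gen_eq, List.map_map] using
    involute_prod_map_ι (Q := Qf p q r) (l.map fun i => Pi.single i 1)

/-- An element of `Λ^k_r` with `k` even commutes with every grade-`m` subspace; if both
`k` and `m` are odd it lies in the twisted centralizer of the grade-`m` subspace. -/
theorem stmt1 (p q r k m : ℕ) (X : CliffordAlgebra (Qf p q r))
    (hX : X ∈ LambdaDeg p q r k) :
    (Even k → ∀ V ∈ gradeSubspace p q r m, X * V = V * X) ∧
    (Odd k → Odd m → ∀ V ∈ gradeSubspace p q r m, involute X * V = V * X) := by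
  refine ⟨fun hk V hV => ?_, fun hk hm V hV => ?_⟩
  · rw [mul_eq_neg_one_pow_smul_mul_of_mem_lambdaDeg hX hV, (hk.mul_right m).neg_one_pow,
      one_smul]
  · rw [involute_of_mem_lambdaDeg hX, hk.neg_one_pow, neg_one_smul, neg_mul,
      mul_eq_neg_one_pow_smul_mul_of_mem_lambdaDeg hX hV, (hk.mul hm).neg_one_pow,
      neg_one_smul, neg_neg]
end
end

section
/- Let Cl(p,q,r) be a Clifford algebra of dimension 2^n with n = p+q+r. For any odd m, the centralizer of the grade-m subspace is contained in the centralizer of the grade-(m+1) subspace: if X commutes with every element of Cl^m(p,q,r), then X commutes with every element of Cl^{m+1}(p,q,r). -/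
/-! Write `X` in the basis of blades `e_U` (as a vector space the Clifford algebra of a diagonal
form is the exterior algebra). Since `e_U e_T = (-1)^(|U||T| + |U ∩ T|) e_T e_U`, and `e_U e_T`
is a nonzero multiple of `e_(U ∆ T)` unless `U ∩ T` contains a null generator, `X` commutes with
`e_T` iff its coordinate `x_U` vanishes whenever that sign is `-1` and `U ∩ T` has no null
generator. When `|S|` is even, such an obstruction `U` for `S` meets `S` in an odd number of
elements, and removing from `S` an element `a` that lies in `U` exactly when `|U|` is odd leaves
an obstruction `U` for `T = S \ {a}`, a blade of the odd grade `|S| - 1`. -/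

open CliffordAlgebra

noncomputable section

namespace CliffordAlgebra

variable {R M : Type*} [CommRing R] [AddCommGroup M] [Module R M] {Q : QuadraticForm R M}

theorem contractLeft_prod_map_ι {d : Module.Dual R M} {l : List M} (h : ∀ v ∈ l, d v = 0) :
    contractLeft d (l.map (ι Q)).prod = 0 := by
  induction l with
  | nil => exact contractLeft_one Q d
  | cons a t ih =>
    simp only [List.map_cons, List.prod_cons, contractLeft_ι_mul, h a List.mem_cons_self,
      zero_smul, ih fun v hv => h v (List.mem_cons_of_mem a hv), mul_zero, sub_zero]

theorem equivExterior_prod_map_ι [Invertible (2 : R)] {l : List M} (hl : l.Pairwise Q.IsOrtho) :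
    equivExterior Q (l.map (ι Q)).prod = (l.map (ExteriorAlgebra.ι R)).prod := by
  induction l with
  | nil => simp
  | cons a t ih =>
    rw [List.pairwise_cons] at hl
    simp only [List.map_cons, List.prod_cons, equivExterior, changeFormEquiv_apply,
      changeForm_ι_mul] at ih ⊢
    rw [ih hl.2, contractLeft_prod_map_ι fun v hv => by simpa using hl.1 v hv, sub_zero]

end CliffordAlgebra

theorem Pi.basisFun_exteriorAlgebra_apply {R I : Type*} [CommRing R] [LinearOrder I] [Finite I]
    (s : Finset I) :
    (Pi.basisFun R I).ExteriorAlgebra s =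
      (s.sort.map fun i => ExteriorAlgebra.ι R (Pi.single i 1)).prod := by
  rw [ExteriorAlgebra.basis_apply_ofCard _ rfl, ExteriorAlgebra.ιMulti_family,
    ExteriorAlgebra.ιMulti_apply, List.ofFn_eq_map, Set.powersetCard.ofFinEmbEquiv_symm_apply,
    ← Finset.listMap_orderEmbOfFin_finRange s rfl, List.map_map]
  simp [Function.comp_def]

theorem Finset.exists_mem_odd_card_erase {α : Type*} [DecidableEq α] {U S : Finset α}
    (hS : Even S.card) (h : Odd (U.card * S.card + (U ∩ S).card)) :
    ∃ a ∈ S, Odd (U.card * (S.erase a).card + (U ∩ S.erase a).card) := by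
  have hUS : Odd (U ∩ S).card := (Nat.odd_add'.1 h).2 (hS.mul_left _)
  rcases Nat.even_or_odd U.card with hU | hU
  · obtain ⟨a, ha⟩ : (S \ U).Nonempty := by
      rw [Finset.nonempty_iff_ne_empty, Ne, Finset.sdiff_eq_empty_iff_subset]
      intro hSU
      rw [Finset.inter_eq_right.2 hSU] at hUS
      exact Nat.not_even_iff_odd.2 hUS hS
    obtain ⟨haS, haU⟩ := Finset.mem_sdiff.1 ha
    refine ⟨a, haS, ?_⟩
    rw [Finset.inter_erase, Finset.erase_eq_of_notMem fun h => haU (Finset.mem_inter.1 h).1]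
    exact (hU.mul_right _).add_odd hUS
  · obtain ⟨a, ha⟩ : (U ∩ S).Nonempty := Finset.card_pos.1 hUS.pos
    have haS := (Finset.mem_inter.1 ha).2
    refine ⟨a, haS, ?_⟩
    rw [Finset.inter_erase, Finset.card_erase_of_mem ha, Finset.card_erase_of_mem haS]
    exact (hU.mul (Nat.Even.sub_odd (Finset.card_pos.2 ⟨a, haS⟩) hS odd_one)).add_even
      (Nat.Odd.sub_odd hUS odd_one)

namespace DiagonalClifford

open QuadraticMap

variable {K I : Type*} [Field K] [LinearOrder I] [Fintype I] (w : I → K)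

def generator (i : I) : CliffordAlgebra (weightedSumSquares K w) := ι _ (Pi.single i 1)

def blade (s : Finset I) : CliffordAlgebra (weightedSumSquares K w) :=
  (s.sort.map (generator w)).prod

variable {w}

theorem isOrtho_single {i j : I} (h : i ≠ j) :
    (weightedSumSquares K w).IsOrtho (Pi.single i 1) (Pi.single j 1) := by
  simp only [isOrtho_def, weightedSumSquares_apply]
  rw [Fintype.sum_eq_add i j h (fun x hx => by simp [hx.1, hx.2])]
  simp [h, h.symm, Pi.single_apply]

theorem generator_mul_self (i : I) :
    generator w i * generator w i = algebraMap K _ (w i) := by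
  simp [generator, weightedSumSquares_apply, Pi.single_apply]

theorem generator_mul_generator {i j : I} (h : i ≠ j) :
    generator w i * generator w j = -(generator w j * generator w i) :=
  ι_mul_ι_comm_of_isOrtho (isOrtho_single h)

@[simp] theorem blade_empty : blade w ∅ = 1 := by simp [blade]

theorem blade_singleton (i : I) : blade w {i} = generator w i := by simp [blade]

theorem blade_insert_of_forall_lt {a : I} {s : Finset I} (h : ∀ x ∈ s, a < x) :
    blade w (insert a s) = generator w a * blade w s := by
  rw [blade, Finset.sort_insert _ (fun x hx => (h x hx).le) fun ha => lt_irrefl a (h a ha)]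
  rfl

theorem prod_map_generator_eq_blade {l : List I} (hl : l.Pairwise (· < ·)) :
    (l.map (generator w)).prod = blade w l.toFinset := by
  rw [blade, (List.toFinset_sort _ hl.nodup).2 (hl.imp le_of_lt)]

theorem generator_mul_blade_of_notMem {i : I} {s : Finset I} (hi : i ∉ s) :
    ∃ c : K, c ≠ 0 ∧ generator w i * blade w s = c • blade w (insert i s) := by
  induction s using Finset.induction_on_min with
  | empty => exact ⟨1, one_ne_zero, by simp [blade_singleton]⟩
  | insert a s ha ih =>
    have hia : i ≠ a := fun h => hi (h ▸ Finset.mem_insert_self a s)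
    rcases hia.lt_or_gt with hlt | hgt
    · refine ⟨1, one_ne_zero, ?_⟩
      rw [one_smul, blade_insert_of_forall_lt (s := insert a s)]
      simpa using ⟨hlt, fun x hx => hlt.trans (ha x hx)⟩
    · obtain ⟨c, hc, hmul⟩ := ih fun h => hi (Finset.mem_insert_of_mem h)
      refine ⟨-c, neg_ne_zero.2 hc, ?_⟩
      have ha' : ∀ x ∈ insert i s, a < x := by simpa using ⟨hgt, ha⟩
      rw [blade_insert_of_forall_lt ha, ← mul_assoc, generator_mul_generator hia, neg_mul,
        mul_assoc, hmul, Finset.insert_comm, blade_insert_of_forall_lt ha', mul_smul_comm,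
        neg_smul]

theorem generator_mul_blade_of_mem {i : I} {s : Finset I} (hi : i ∈ s) :
    ∃ c : K, c ≠ 0 ∧ generator w i * blade w s = (c * w i) • blade w (s.erase i) := by
  induction s using Finset.induction_on_min with
  | empty => simp at hi
  | insert a s ha ih =>
    have has : a ∉ s := fun h => lt_irrefl a (ha a h)
    by_cases hia : i = a
    · subst hia
      refine ⟨1, one_ne_zero, ?_⟩
      rw [blade_insert_of_forall_lt ha, ← mul_assoc, generator_mul_self, one_mul,
        Finset.erase_insert has, Algebra.algebraMap_eq_smul_one, smul_mul_assoc, one_mul]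
    · obtain ⟨c, hc, hmul⟩ := ih ((Finset.mem_insert.1 hi).resolve_left hia)
      refine ⟨-c, neg_ne_zero.2 hc, ?_⟩
      have ha' : ∀ x ∈ s.erase i, a < x := fun x hx => ha x (Finset.mem_of_mem_erase hx)
      rw [blade_insert_of_forall_lt ha, ← mul_assoc, generator_mul_generator hia, neg_mul,
        mul_assoc, hmul, Finset.erase_insert_of_ne (Ne.symm hia), blade_insert_of_forall_lt ha',
        mul_smul_comm, neg_mul, neg_smul]

theorem blade_mul_blade (U T : Finset I) :
    ∃ c : K, c ≠ 0 ∧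
      blade w U * blade w T = (c * ∏ i ∈ U ∩ T, w i) • blade w (symmDiff U T) := by
  induction U using Finset.induction_on_min with
  | empty => exact ⟨1, one_ne_zero, by simp [symmDiff]⟩
  | insert a U ha ih =>
    obtain ⟨c, hc, hmul⟩ := ih
    have haU : a ∉ U := fun h => lt_irrefl a (ha a h)
    rw [blade_insert_of_forall_lt ha, mul_assoc, hmul, mul_smul_comm]
    by_cases haT : a ∈ T
    · obtain ⟨c', hc', hmul'⟩ := generator_mul_blade_of_mem (w := w) (i := a)
        (s := symmDiff U T) (by simp [Finset.mem_symmDiff, haT, haU])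
      have hset : (symmDiff U T).erase a = symmDiff (insert a U) T := by
        ext x; by_cases hx : x = a <;> simp [Finset.mem_symmDiff, hx, haT]
      refine ⟨c * c', mul_ne_zero hc hc', ?_⟩
      rw [hmul', smul_smul, hset, Finset.insert_inter_of_mem haT,
        Finset.prod_insert fun h => haU (Finset.mem_inter.1 h).1]
      congr 1; ring
    · obtain ⟨c', hc', hmul'⟩ := generator_mul_blade_of_notMem (w := w) (i := a)
        (s := symmDiff U T) (by simp [Finset.mem_symmDiff, haT, haU])
      have hset : insert a (symmDiff U T) = symmDiff (insert a U) T := by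
        ext x; by_cases hx : x = a <;> simp [Finset.mem_symmDiff, hx, haT]
      refine ⟨c * c', mul_ne_zero hc hc', ?_⟩
      rw [hmul', smul_smul, hset, Finset.insert_inter_of_notMem haT]
      congr 1; ring

theorem generator_mul_blade_comm (i : I) (s : Finset I) :
    generator w i * blade w s =
      (-1 : K) ^ (s.card + if i ∈ s then 1 else 0) • (blade w s * generator w i) := by
  induction s using Finset.induction_on_min with
  | empty => simp
  | insert a s ha ih =>
    have has : a ∉ s := fun h => lt_irrefl a (ha a h)
    rw [blade_insert_of_forall_lt ha, Finset.card_insert_of_notMem has]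
    by_cases hia : i = a
    · subst hia
      conv_lhs => rw [ih, if_neg has, add_zero, mul_smul_comm]
      rw [if_pos (Finset.mem_insert_self i s), pow_succ, pow_succ, mul_neg_one, mul_neg_one,
        neg_neg, mul_assoc]
    · rw [← mul_assoc, generator_mul_generator hia, neg_mul, mul_assoc, ih, mul_smul_comm]
      simp only [Finset.mem_insert, hia, false_or, add_right_comm _ 1, pow_succ, mul_neg_one,
        neg_smul, mul_assoc]

theorem blade_mul_blade_comm (U T : Finset I) :
    blade w U * blade w T =
      (-1 : K) ^ (U.card * T.card + (U ∩ T).card) • (blade w T * blade w U) := by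
  induction U using Finset.induction_on_min with
  | empty => simp
  | insert a U ha ih =>
    have haU : a ∉ U := fun h => lt_irrefl a (ha a h)
    rw [blade_insert_of_forall_lt ha, mul_assoc, ih, mul_smul_comm, ← mul_assoc,
      generator_mul_blade_comm, smul_mul_assoc, smul_smul, mul_assoc, ← pow_add,
      Finset.card_insert_of_notMem haU]
    congr 2
    by_cases haT : a ∈ T
    · rw [if_pos haT, Finset.insert_inter_of_mem haT,
        Finset.card_insert_of_notMem fun h => haU (Finset.mem_inter.1 h).1]
      ring
    · rw [if_neg haT, Finset.insert_inter_of_notMem haT]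
      ring

variable [Invertible (2 : K)]

theorem equivExterior_blade (s : Finset I) :
    equivExterior _ (blade w s) = (Pi.basisFun K I).ExteriorAlgebra s := by
  have hsort : s.sort.Pairwise (· ≠ ·) := s.sortedLT_sort.pairwise.imp ne_of_lt
  rw [Pi.basisFun_exteriorAlgebra_apply, blade,
    show generator w = ι _ ∘ fun i => Pi.single i 1 from rfl, ← List.map_map,
    equivExterior_prod_map_ι (List.pairwise_map.2 (hsort.imp isOrtho_single)), List.map_map]
  rfl

variable (w) in
def bladeBasis : Module.Basis (Finset I) K (CliffordAlgebra (weightedSumSquares K w)) :=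
  (Pi.basisFun K I).ExteriorAlgebra.map (equivExterior _).symm

@[simp] theorem bladeBasis_apply (s : Finset I) : bladeBasis w s = blade w s := by
  rw [bladeBasis, Module.Basis.map_apply, ← equivExterior_blade, LinearEquiv.symm_apply_apply]

theorem commute_blade_iff (X : CliffordAlgebra (weightedSumSquares K w)) (T : Finset I) :
    Commute X (blade w T) ↔ ∀ U, Odd (U.card * T.card + (U ∩ T).card) →
      ∏ i ∈ U ∩ T, w i ≠ 0 → (bladeBasis w).repr X U = 0 := by
  choose c hc hmul using fun U => blade_mul_blade (w := w) U T
  set sign : Finset I → K := fun U => (-1) ^ (U.card * T.card + (U ∩ T).card)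
  have hcomm U : blade w U * blade w T - blade w T * blade w U =
      ((1 - sign U) * (c U * ∏ i ∈ U ∩ T, w i)) • blade w (symmDiff U T) := by
    rw [blade_mul_blade_comm T U, mul_comm T.card, Finset.inter_comm, hmul, smul_smul,
      ← sub_smul, sub_mul, one_mul]
  have hX : X * blade w T - blade w T * X = ∑ U,
      ((bladeBasis w).repr X U * ((1 - sign U) * (c U * ∏ i ∈ U ∩ T, w i))) •
        blade w (symmDiff U T) := by
    conv_lhs => rw [← (bladeBasis w).sum_repr X]
    simp only [Finset.sum_mul, Finset.mul_sum, ← Finset.sum_sub_distrib, bladeBasis_apply,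
      smul_mul_assoc, mul_smul_comm, ← smul_sub, hcomm, smul_smul]
  have hindep : LinearIndependent K fun U => blade w (symmDiff U T) := by
    simpa [Function.comp_def] using
      (bladeBasis w).linearIndependent.comp _ (symmDiff_left_injective T)
  have hcoeff U : (bladeBasis w).repr X U * ((1 - sign U) * (c U * ∏ i ∈ U ∩ T, w i)) = 0 ↔
      (Odd (U.card * T.card + (U ∩ T).card) → ∏ i ∈ U ∩ T, w i ≠ 0 →
        (bladeBasis w).repr X U = 0) := by
    have hchar : (-1 : K) ≠ 1 := fun h => Invertible.ne_zero (2 : K) (by linear_combination -h)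
    simp only [sign, mul_eq_zero, sub_eq_zero, hc U, false_or, eq_comm (a := (1 : K)),
      neg_one_pow_eq_one_iff_even hchar, ← Nat.not_even_iff_odd]
    tauto
  rw [commute_iff_eq, ← sub_eq_zero, hX, ← forall_congr' hcoeff]
  exact ⟨Fintype.linearIndependent_iff.1 hindep _, fun h => by simp [h]⟩

theorem commute_blade_of_forall_commute_blade_erase {X : CliffordAlgebra (weightedSumSquares K w)}
    {S : Finset I} (hS : Even S.card) (h : ∀ a ∈ S, Commute X (blade w (S.erase a))) :
    Commute X (blade w S) := by
  refine (commute_blade_iff X S).2 fun U hodd hprod => ?_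
  obtain ⟨a, haS, hodd'⟩ := Finset.exists_mem_odd_card_erase hS hodd
  refine (commute_blade_iff X _).1 (h a haS) U hodd' ?_
  exact Finset.prod_ne_zero_iff.2 fun i hi => Finset.prod_ne_zero_iff.1 hprod i
    (Finset.inter_subset_inter_left (Finset.erase_subset a S) hi)

end DiagonalClifford

open DiagonalClifford

theorem blade_mem_gradeSubspace {p q r m : ℕ} {T : Finset (Fin (p + q + r))} (hT : T.card = m) :
    (blade (fun i : Fin (p + q + r) => cliffSig p q i) T : CliffordAlgebra (Qf p q r)) ∈
      gradeSubspace p q r m :=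
  Submodule.subset_span ⟨T.sort (· ≤ ·), T.sortedLT_sort.pairwise.isChain,
    (Finset.length_sort _).trans hT, rfl⟩

theorem prod_map_gen_eq_blade {p q r : ℕ} {l : List (Fin (p + q + r))}
    (hl : l.Pairwise (· < ·)) :
    (l.map (gen p q r)).prod =
      (blade (fun i : Fin (p + q + r) => cliffSig p q i) l.toFinset : CliffordAlgebra (Qf p q r)) :=
  prod_map_generator_eq_blade hl

/-- For odd `m`, the centralizer of the grade-`m` subspace is contained in the centralizer
of the grade-`(m+1)` subspace. -/
theorem stmt6 (p q r m : ℕ) (hm : Odd m) (X : CliffordAlgebra (Qf p q r))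
    (hX : ∀ V ∈ gradeSubspace p q r m, X * V = V * X) :
    ∀ V ∈ gradeSubspace p q r (m + 1), X * V = V * X := by
  intro V hV
  refine (Commute.span_right (fun v hv => ?_) V hV).eq
  obtain ⟨l, hl, hlen, rfl⟩ := hv
  have hl' : l.Pairwise (· < ·) := List.isChain_iff_pairwise.1 hl
  have hcard : l.toFinset.card = m + 1 := by rw [List.toFinset_card_of_nodup hl'.nodup, hlen]
  rw [prod_map_gen_eq_blade hl']
  refine commute_blade_of_forall_commute_blade_erase (hcard ▸ hm.add_one) fun a ha =>
    hX _ (blade_mem_gradeSubspace ?_)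
  rw [Finset.card_erase_of_mem ha, hcard, Nat.add_sub_cancel]
end
end

section
/- Let Cl(p,q,r) be a Clifford algebra with n = p+q+r. For any even m, if X is an odd element (α(X) = −X) such that α(X)·V = V·X for all V in the grade-m subspace, then also α(X)·W = W·X for all W in the grade-(m+1) subspace. -/
open CliffordAlgebra

noncomputable section

/-!
For odd `X`, the twisted commutation `α(X) V = V X` says that `X` anticommutes with `V`.
For a non-null generator `e` (with `e² = c = ±1`), the involution `x ↦ c e x e` preserves
oddness and anticommutation with every monomial, since `e` commutes or anticommutes with
each monomial; so `X` splits into a part commuting with `e` and a part anticommuting with it.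
A null generator anticommutes with every odd element. Splitting successively along the factors
of a grade-`(m+1)` monomial `M`, it suffices to treat `X` that commutes or anticommutes with
each factor. If `X` commutes with a factor `e_j`, write `M = ± e_j V` with `V` of grade `m`:
then `X M = ± e_j X V = ∓ e_j V X = - M X`. If `X` anticommutes with all `m + 1` factors, it
anticommutes with `M` because `m + 1` is odd.
-/

def Anticommute {R : Type*} [Ring R] (a b : R) : Prop := a * b = -(b * a)

namespace Anticommute

variable {R : Type*} [Ring R] {a b c e x v : R}

theorem symm (h : Anticommute a b) : Anticommute b a := by
  rw [Anticommute, h, neg_neg]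

theorem neg_right (h : Anticommute a b) : Anticommute a (-b) := by
  rw [Anticommute, mul_neg, neg_mul, h]

theorem add_left (ha : Anticommute a c) (hb : Anticommute b c) : Anticommute (a + b) c := by
  rw [Anticommute, add_mul, mul_add, ha, hb, neg_add]

theorem sub_left (ha : Anticommute a c) (hb : Anticommute b c) : Anticommute (a - b) c := by
  rw [Anticommute, sub_mul, mul_sub, ha, hb, neg_sub_neg, neg_sub]

theorem smul_left {S : Type*} [Monoid S] [DistribMulAction S R] [IsScalarTower S R R]
    [SMulCommClass S R R] (s : S) (h : Anticommute a b) : Anticommute (s • a) b := by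
  rw [Anticommute, smul_mul_assoc, mul_smul_comm, h, smul_neg]

theorem mul_commute_right (hab : Anticommute a b) (hac : Commute a c) :
    Anticommute a (b * c) := by
  rw [Anticommute, ← mul_assoc, hab, neg_mul, mul_assoc, hac.eq, mul_assoc]

theorem _root_.Commute.mul_anticommute_right (hab : Commute a b) (hac : Anticommute a c) :
    Anticommute a (b * c) := by
  rw [Anticommute, ← mul_assoc, hab.eq, mul_assoc, hac, mul_neg, mul_assoc]

theorem mul_right (hab : Anticommute a b) (hac : Anticommute a c) : Commute a (b * c) := by
  rw [Commute, SemiconjBy, ← mul_assoc, hab, neg_mul, mul_assoc, hac, mul_neg, neg_neg,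
    mul_assoc]

theorem sandwich (he : Commute e v ∨ Anticommute e v) (hx : Anticommute x v) :
    Anticommute (e * x * e) v := by
  refine symm ?_
  rcases he with he | he
  · exact (he.symm.mul_anticommute_right hx.symm).mul_commute_right he.symm
  · exact (he.symm.mul_right hx.symm).mul_anticommute_right he.symm

theorem mul_list_prod {L : List R} (h : ∀ b ∈ L, Anticommute a b) :
    a * L.prod = (-1) ^ L.length * (L.prod * a) := by
  induction L with
  | nil => simp
  | cons b L ih =>
    rw [List.forall_mem_cons] at h
    rw [List.prod_cons, List.length_cons, ← mul_assoc, h.1, neg_mul, mul_assoc, ih h.2,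
      ← mul_assoc b, ← ((Commute.neg_one_left b).pow_left _).eq, pow_succ]
    simp only [mul_neg_one, neg_mul, mul_assoc]

theorem list_prod_of_odd {L : List R} (h : ∀ b ∈ L, Anticommute a b) (hL : Odd L.length) :
    Anticommute a L.prod := by
  rw [Anticommute, mul_list_prod h, hL.neg_one_pow, neg_one_mul]

section Family

variable {ι : Type*} {g : ι → R} (hg : Pairwise fun i j => Anticommute (g i) (g j))
include hg

theorem commute_or_anticommute_list_prod_map (i : ι) (l : List ι) :
    Commute (g i) (l.map g).prod ∨ Anticommute (g i) (l.map g).prod := by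
  induction l with
  | nil => exact Or.inl (Commute.one_right _)
  | cons a l ih =>
    rw [List.map_cons, List.prod_cons]
    obtain rfl | hia := eq_or_ne i a
    · exact ih.imp (Commute.refl _).mul_right (Commute.refl _).mul_anticommute_right
    · exact (ih.imp (hg hia).mul_commute_right (hg hia).mul_right).symm

theorem list_prod_map_eq_or_eq_neg [DecidableEq ι] {j : ι} {l : List ι} (hj : j ∈ l) :
    (l.map g).prod = g j * ((l.erase j).map g).prod ∨
      (l.map g).prod = -(g j * ((l.erase j).map g).prod) := by
  induction l with
  | nil => exact absurd hj List.not_mem_nil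
  | cons a l ih =>
    obtain rfl | haj := eq_or_ne a j
    · simp
    · rw [List.erase_cons_tail (by simpa using haj), List.map_cons, List.map_cons,
        List.prod_cons, List.prod_cons]
      have hja : g a * g j = -(g j * g a) := hg haj
      rcases ih ((List.mem_cons.mp hj).resolve_left (Ne.symm haj)) with h | h <;> rw [h]
      · right; rw [← mul_assoc, hja, neg_mul, mul_assoc]
      · left; rw [mul_neg, ← mul_assoc, hja, neg_mul, neg_neg, mul_assoc]

theorem list_prod_map_of_commute [DecidableEq ι] {j : ι} {l : List ι} (hj : j ∈ l)
    (hxj : Commute x (g j)) (hx : Anticommute x ((l.erase j).map g).prod) :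
    Anticommute x (l.map g).prod := by
  rcases list_prod_map_eq_or_eq_neg hg hj with h | h <;> rw [h]
  · exact hxj.mul_anticommute_right hx
  · exact (hxj.mul_anticommute_right hx).neg_right

end Family

end Anticommute

/-- The `∓1`-eigencomponents of `x` under the involution `x ↦ c e x e`. -/
theorem anticommute_half_sub_smul_mul_mul {K R : Type*} [Field K] [NeZero (2 : K)] [Ring R]
    [Algebra K R] {e : R} {c : K} (he : e * e = algebraMap K R c) (hc : c * c = 1) (x : R) :
    Anticommute e ((2 : K)⁻¹ • (x - c • (e * x * e))) ∧
      Commute e (x - (2 : K)⁻¹ • (x - c • (e * x * e))) := by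
  have hl : e * (e * x * e) = c • (x * e) := by
    rw [← mul_assoc, ← mul_assoc, he, ← Algebra.smul_def, smul_mul_assoc]
  have hr : e * x * e * e = c • (e * x) := by
    rw [mul_assoc, he, ← Algebra.commutes, ← Algebra.smul_def]
  have hez : e * ((2 : K)⁻¹ • (x - c • (e * x * e))) = (2 : K)⁻¹ • (e * x - x * e) := by
    rw [mul_smul_comm, mul_sub, mul_smul_comm, hl, smul_smul, hc, one_smul]
  have hze : (2 : K)⁻¹ • (x - c • (e * x * e)) * e = (2 : K)⁻¹ • (x * e - e * x) := by
    rw [smul_mul_assoc, sub_mul, smul_mul_assoc, hr, smul_smul, hc, one_smul]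
  constructor
  · rw [Anticommute, hez, hze, ← smul_neg, neg_sub]
  · have h2 : (2 : K)⁻¹ + 2⁻¹ = 1 := by rw [← two_mul, mul_inv_cancel₀ two_ne_zero]
    rw [Commute, SemiconjBy, mul_sub, sub_mul, hez, hze]
    linear_combination (norm := module) h2 • (x * e - e * x)

theorem QuadraticMap.isOrtho_weightedSumSquares_single {ι R : Type*} [Fintype ι]
    [DecidableEq ι] [CommRing R] (w : ι → R) {i : ι} {v : ι → R} (h : w i * v i = 0) :
    (weightedSumSquares R w).IsOrtho (Pi.single i 1) v := by
  rw [isOrtho_def]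
  simp only [weightedSumSquares_apply, smul_eq_mul, ← Finset.sum_add_distrib]
  refine Finset.sum_congr rfl fun k _ => ?_
  obtain rfl | hki := eq_or_ne k i
  · simp only [Pi.add_apply, Pi.single_eq_same]
    linear_combination 2 * h
  · simp [Pi.single_eq_of_ne hki]

theorem CliffordAlgebra.ι_mul_eq_involute_mul_ι {R M : Type*} [CommRing R] [AddCommGroup M]
    [Module R M] {Q : QuadraticForm R M} {a : M} (ha : ∀ b, Q.IsOrtho a b)
    (x : CliffordAlgebra Q) : ι Q a * x = involute x * ι Q a := by
  induction x using CliffordAlgebra.induction with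
  | algebraMap s => rw [AlgHom.commutes]; exact (Algebra.commutes s _).symm
  | ι b => rw [involute_ι, neg_mul, ← ι_mul_ι_comm_of_isOrtho (ha b)]
  | mul x y hx hy => rw [map_mul, ← mul_assoc, hx, mul_assoc, hy, ← mul_assoc]
  | add x y hx hy => rw [map_add, mul_add, add_mul, hx, hy]

theorem CliffordAlgebra.anticommute_iff_involute_mul_eq {R M : Type*} [CommRing R]
    [AddCommGroup M] [Module R M] {Q : QuadraticForm R M} {x : CliffordAlgebra Q}
    (hx : involute x = -x) (v : CliffordAlgebra Q) :
    Anticommute x v ↔ involute x * v = v * x := by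
  rw [hx, neg_mul, neg_eq_iff_eq_neg, Anticommute]

section Generators

variable {p q r : ℕ}

theorem cliffSig_mul_self_eq_one_or_eq_zero (i : ℕ) :
    cliffSig p q i * cliffSig p q i = 1 ∨ cliffSig p q i = 0 := by
  unfold cliffSig; split_ifs <;> norm_num

theorem gen_mul_self (i : Fin (p + q + r)) :
    gen p q r i * gen p q r i = algebraMap ℝ _ (cliffSig p q i) := by
  rw [gen, ι_sq_scalar, Qf, QuadraticMap.weightedSumSquares_apply,
    Finset.sum_eq_single_of_mem i (Finset.mem_univ i) fun k _ hki => by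
      simp [Pi.single_eq_of_ne hki]]
  simp

theorem pairwise_anticommute_gen :
    Pairwise fun i j : Fin (p + q + r) => Anticommute (gen p q r i) (gen p q r j) :=
  fun _ _ hij => ι_mul_ι_comm_of_isOrtho
    (QuadraticMap.isOrtho_weightedSumSquares_single _
      (mul_eq_zero_of_right _ (Pi.single_eq_of_ne hij _)))

theorem anticommute_gen_of_cliffSig_eq_zero {i : Fin (p + q + r)} (h0 : cliffSig p q i = 0)
    {x : CliffordAlgebra (Qf p q r)} (hx : involute x = -x) : Anticommute (gen p q r i) x := by
  rw [Anticommute, gen, ι_mul_eq_involute_mul_ι, hx, neg_mul]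
  exact fun v => QuadraticMap.isOrtho_weightedSumSquares_single _ (by simp [h0])

end Generators

theorem anticommute_list_prod_gen_of_subset {p q r : ℕ} {l : List (Fin (p + q + r))}
    (hl : Odd l.length) {bs : List (Fin (p + q + r))} (hbs : bs ⊆ l)
    {x : CliffordAlgebra (Qf p q r)} (hodd : involute x = -x)
    (hx : ∀ j ∈ l, Anticommute x ((l.erase j).map (gen p q r)).prod)
    (hgen : ∀ i ∈ l, i ∉ bs → Anticommute (gen p q r i) x) :
    Anticommute x (l.map (gen p q r)).prod := by
  induction bs generalizing x with
  | nil =>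
    refine Anticommute.list_prod_of_odd ?_ (by rwa [List.length_map])
    simpa only [List.forall_mem_map] using fun i hi => (hgen i hi List.not_mem_nil).symm
  | cons b t ih =>
    obtain ⟨hb, ht⟩ := List.cons_subset.mp hbs
    have hgen_t : ∀ i ∈ l, i ≠ b → i ∉ t → Anticommute (gen p q r i) x :=
      fun i hi hib hit => hgen i hi (by simp [hib, hit])
    rcases cliffSig_mul_self_eq_one_or_eq_zero (p := p) (q := q) b with hc | h0
    · set e := gen p q r b
      set z := (2 : ℝ)⁻¹ • (x - cliffSig p q b • (e * x * e))
      obtain ⟨hez, hexz⟩ := anticommute_half_sub_smul_mul_mul (gen_mul_self b) hc x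
      have hexe_odd : involute (e * x * e) = -(e * x * e) := by simp [e, gen, hodd]
      have hexe : ∀ j ∈ l, Anticommute (e * x * e) ((l.erase j).map (gen p q r)).prod :=
        fun j hj => (hx j hj).sandwich
          (Anticommute.commute_or_anticommute_list_prod_map pairwise_anticommute_gen b _)
      have hz_odd : involute z = -z := by
        simp only [z, map_smul, map_sub, hodd, hexe_odd]
        module
      have hz : ∀ j ∈ l, Anticommute z ((l.erase j).map (gen p q r)).prod :=
        fun j hj => ((hx j hj).sub_left ((hexe j hj).smul_left _)).smul_left _
      have hgen_z : ∀ i ∈ l, i ∉ t → Anticommute (gen p q r i) z := by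
        intro i hi hit
        obtain rfl | hib := eq_or_ne i b
        · exact hez
        · have hxi := (hgen_t i hi hib hit).symm
          have hexei := hxi.sandwich (Or.inr (pairwise_anticommute_gen hib.symm))
          exact ((hxi.sub_left (hexei.smul_left _)).smul_left _).symm
      have hy : Anticommute (x - z) (l.map (gen p q r)).prod :=
        Anticommute.list_prod_map_of_commute pairwise_anticommute_gen hb hexz.symm
          ((hx b hb).sub_left (hz b hb))
      simpa using hy.add_left (ih ht hz_odd hz hgen_z)
    · refine ih ht hodd hx fun i hi hit => ?_
      obtain rfl | hib := eq_or_ne i b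
      · exact anticommute_gen_of_cliffSig_eq_zero h0 hodd
      · exact hgen_t i hi hib hit

theorem anticommute_list_prod_gen {p q r : ℕ} {l : List (Fin (p + q + r))} (hl : Odd l.length)
    {x : CliffordAlgebra (Qf p q r)} (hodd : involute x = -x)
    (hx : ∀ j ∈ l, Anticommute x ((l.erase j).map (gen p q r)).prod) :
    Anticommute x (l.map (gen p q r)).prod :=
  anticommute_list_prod_gen_of_subset hl (List.Subset.refl l) hodd hx fun _ hi hni => absurd hi hni

/-- For even `m`, an odd element of the twisted centralizer of the grade-`m` subspace lies
in the twisted centralizer of the grade-`(m+1)` subspace. -/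
theorem stmt7 (p q r m : ℕ) (hm : Even m) (X : CliffordAlgebra (Qf p q r))
    (hodd : involute X = -X)
    (hX : ∀ V ∈ gradeSubspace p q r m, involute X * V = V * X) :
    ∀ W ∈ gradeSubspace p q r (m + 1), involute X * W = W * X := by
  have hanti := anticommute_iff_involute_mul_eq hodd
  suffices gradeSubspace p q r (m + 1) ≤
      LinearMap.eqLocus (LinearMap.mulLeft ℝ (involute X)) (LinearMap.mulRight ℝ X) from
    fun W hW => this hW
  refine Submodule.span_le.mpr ?_
  rintro _ ⟨l, hchain, hlen, rfl⟩
  refine (hanti _).mp (anticommute_list_prod_gen (by rw [hlen]; exact hm.add_one) hodd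
    fun j hj => (hanti _).mpr (hX _ (Submodule.subset_span ⟨l.erase j, ?_, ?_, rfl⟩)))
  · exact hchain.sublist List.erase_sublist
  · rw [List.length_erase_of_mem hj, hlen, Nat.add_sub_cancel]
end
end

section
/- In a non-degenerate Clifford algebra Cl(p,q,0) with n = p+q odd, the centralizer of the grade-1 subspace equals the direct sum of the scalars and the grade-n subspace (the span of the product of all n generators). -/
open CliffordAlgebra

noncomputable section

/-!
The generators `e i` anticommute pairwise and square to nonzero scalars `w i`, so conjugating
an ordered monomial `e_{i₁} ⋯ e_{iₖ}` by `e i` multiplies it by `(-1)^m`, where `m` counts the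
factors different from `e i`. The ordered monomials span the algebra, and averaging an element
`X` over conjugation by `e i` keeps exactly the monomials fixed by that conjugation; if `X`
commutes with every `e i`, the averaging fixes `X`, so `X` is a combination of the monomials
fixed by every conjugation; only the spanning of the monomials, not their linear independence,
is needed. A monomial without repeated factors is fixed by all of them only if
it is `1` or contains every generator, and the latter, the pseudoscalar, is fixed precisely
when the number of generators is odd.
-/

open Submodule

theorem List.Nodup.countP_ne_eq_length_sub_one {σ : Type*} [DecidableEq σ] {l : List σ}
    (hl : l.Nodup) {i : σ} (hi : i ∈ l) : l.countP (· ≠ i) = l.length - 1 := by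
  rw [List.countP_eq_length_filter, ← List.length_erase_of_mem hi, hl.erase_eq_filter]
  exact congrArg List.length (List.filter_congr fun x _ => by by_cases x = i <;> simp [*])

theorem List.eq_nil_or_forall_mem_of_even_countP_ne {σ : Type*} [DecidableEq σ] {l : List σ}
    (hl : l.Nodup) (h : ∀ i, Even (l.countP (· ≠ i))) : l = [] ∨ ∀ i, i ∈ l := by
  by_contra! hcon
  obtain ⟨⟨j, hj⟩, i, hi⟩ := And.intro (List.exists_mem_of_ne_nil _ hcon.1) hcon.2
  have h_i : l.countP (· ≠ i) = l.length :=
    List.countP_eq_length.2 fun a ha => by simpa using ne_of_mem_of_not_mem ha hi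
  have h_i_even := h i
  have h_j_even := h j
  rw [h_i, Nat.even_iff] at h_i_even
  rw [hl.countP_ne_eq_length_sub_one hj, Nat.even_iff] at h_j_even
  have := List.length_pos_of_mem hj
  omega

theorem mul_prod_map_eq_neg_one_pow_zsmul {A σ : Type*} [Ring A] [DecidableEq σ] {e : σ → A}
    (he : Pairwise fun i j => e i * e j = -(e j * e i)) (i : σ) (l : List σ) :
    e i * (l.map e).prod = (-1 : ℤ) ^ l.countP (· ≠ i) • ((l.map e).prod * e i) := by
  induction l with
  | nil => simp
  | cons j l ih =>
    rw [List.map_cons, List.prod_cons, List.countP_cons, ← mul_assoc]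
    by_cases hji : j = i
    · subst hji
      conv_lhs => rw [mul_assoc, ih, mul_smul_comm]
      simp [mul_assoc]
    · rw [he (Ne.symm hji), neg_mul, mul_assoc, ih, mul_smul_comm, ← neg_smul, mul_assoc]
      simp [hji, pow_succ]

section OrderedMonomials

variable {K A σ : Type*} [CommRing K] [Ring A] [Algebra K A] [LinearOrder σ]

def orderedMonomials (e : σ → A) (P : List σ → Prop) : Set A :=
  (fun l : List σ => (l.map e).prod) '' {l | l.Pairwise (· < ·) ∧ P l}

variable {e : σ → A} {w : σ → K}

theorem exists_mul_prod_map_eq_smul (he : Pairwise fun i j => e i * e j = -(e j * e i))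
    (hsq : ∀ i, e i * e i = algebraMap K A (w i)) (i : σ) {l : List σ}
    (hl : l.Pairwise (· < ·)) :
    ∃ (c : K) (l' : List σ), l'.Pairwise (· < ·) ∧ l' ⊆ i :: l ∧
      e i * (l.map e).prod = c • (l'.map e).prod := by
  induction l with
  | nil => exact ⟨1, [i], by simp, by simp, by simp⟩
  | cons j l ih =>
    rw [List.pairwise_cons] at hl
    rw [List.map_cons, List.prod_cons, ← mul_assoc]
    rcases lt_trichotomy i j with hij | rfl | hji
    · refine ⟨1, i :: j :: l, ?_, List.Subset.refl _, by simp [mul_assoc]⟩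
      refine List.pairwise_cons.2 ⟨fun a ha => ?_, List.pairwise_cons.2 hl⟩
      rcases List.mem_cons.1 ha with rfl | ha
      exacts [hij, hij.trans (hl.1 a ha)]
    · exact ⟨w i, l, hl.2, fun a ha => by simp [ha], by rw [hsq, Algebra.smul_def]⟩
    · obtain ⟨c, l', hl', hsub, heq⟩ := ih hl.2
      refine ⟨-c, j :: l', List.pairwise_cons.2 ⟨fun a ha => ?_, hl'⟩, ?_, ?_⟩
      · rcases List.mem_cons.1 (hsub ha) with rfl | ha
        exacts [hji, hl.1 a ha]
      · exact List.cons_subset.2 ⟨by simp,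
          List.Subset.trans hsub (List.cons_subset_cons _ (List.subset_cons_self _ _))⟩
      · rw [he hji.ne', neg_mul, mul_assoc, heq, List.map_cons, List.prod_cons, mul_smul_comm,
          neg_smul]

theorem span_orderedMonomials_eq_top (he : Pairwise fun i j => e i * e j = -(e j * e i))
    (hsq : ∀ i, e i * e i = algebraMap K A (w i)) (hgen : Algebra.adjoin K (Set.range e) = ⊤) :
    span K (orderedMonomials e fun _ => True) = ⊤ := by
  set B := span K (orderedMonomials e fun _ => True)
  have hmul (i : σ) : B ≤ B.comap (LinearMap.mulLeft K (e i)) := span_le.2 <| by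
    rintro _ ⟨l, ⟨hl, -⟩, rfl⟩
    obtain ⟨c, l', hl', -, heq⟩ := exists_mul_prod_map_eq_smul he hsq i hl
    rw [SetLike.mem_coe, mem_comap, LinearMap.mulLeft_apply, heq]
    exact smul_mem _ _ (subset_span ⟨l', ⟨hl', trivial⟩, rfl⟩)
  have hone : (1 : A) ∈ B := subset_span ⟨[], ⟨List.Pairwise.nil, trivial⟩, by simp⟩
  have hleft (x : A) : ∀ z ∈ B, x * z ∈ B := by
    have hx : x ∈ Algebra.adjoin K (Set.range e) := hgen ▸ Algebra.mem_top
    induction hx using Algebra.adjoin_induction with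
    | mem x hx => obtain ⟨i, rfl⟩ := hx; exact hmul i
    | algebraMap r => exact fun z hz => Algebra.smul_def r z ▸ smul_mem _ _ hz
    | add x y _ _ hx hy => exact fun z hz => (add_mul x y z).symm ▸ add_mem (hx z hz) (hy z hz)
    | mul x y _ _ hx hy => exact fun z hz => (mul_assoc x y z).symm ▸ hx _ (hy z hz)
  exact eq_top_iff.2 fun x _ => mul_one x ▸ hleft x 1 hone

theorem mul_prod_map_mul_eq_smul (he : Pairwise fun i j => e i * e j = -(e j * e i))
    (hsq : ∀ i, e i * e i = algebraMap K A (w i)) (i : σ) (l : List σ) :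
    e i * (l.map e).prod * e i = w i • (-1 : ℤ) ^ l.countP (· ≠ i) • (l.map e).prod := by
  rw [mul_prod_map_eq_neg_one_pow_zsmul he, smul_mul_assoc, mul_assoc, hsq, ← Algebra.commutes,
    ← Algebra.smul_def, smul_comm]

end OrderedMonomials

section Centralizer

variable {K A σ : Type*} [Field K] [NeZero (2 : K)] [Ring A] [Algebra K A] [LinearOrder σ]
  {e : σ → A} {w : σ → K}

theorem mem_span_orderedMonomials_of_commute (he : Pairwise fun i j => e i * e j = -(e j * e i))
    (hsq : ∀ i, e i * e i = algebraMap K A (w i)) (hw : ∀ i, w i ≠ 0)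
    (hgen : Algebra.adjoin K (Set.range e) = ⊤) {X : A} (hX : ∀ i, Commute (e i) X)
    (I : Finset σ) :
    X ∈ span K (orderedMonomials e fun l => ∀ i ∈ I, Even (l.countP (· ≠ i))) := by
  induction I using Finset.induction_on with
  | empty => simp [span_orderedMonomials_eq_top he hsq hgen]
  | insert i I _ ih =>
    -- `P x` is the mean of `x` and its conjugate `(e i)⁻¹ * x * e i = (w i)⁻¹ • (e i * x * e i)`
    let P : A →ₗ[K] A := (2 : K)⁻¹ •
      (LinearMap.id + (w i)⁻¹ • (LinearMap.mulLeft K (e i) ∘ₗ LinearMap.mulRight K (e i)))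
    have hP_apply (x : A) : P x = (2 : K)⁻¹ • (x + (w i)⁻¹ • (e i * x * e i)) := by
      simp [P, mul_assoc]
    have hPX : P X = X := by
      rw [hP_apply, (hX i).eq, mul_assoc, hsq, ← Algebra.commutes, ← Algebra.smul_def,
        inv_smul_smul₀ (hw i), ← two_smul K X, inv_smul_smul₀ two_ne_zero]
    have hP : span K (orderedMonomials e fun l => ∀ i ∈ I, Even (l.countP (· ≠ i))) ≤
        (span K (orderedMonomials e fun l => ∀ j ∈ insert i I, Even (l.countP (· ≠ j)))).comap
          P := by
      refine span_le.2 ?_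
      rintro _ ⟨l, ⟨hl, hI⟩, rfl⟩
      rw [SetLike.mem_coe, mem_comap, hP_apply, mul_prod_map_mul_eq_smul he hsq,
        inv_smul_smul₀ (hw i)]
      rcases Nat.even_or_odd (l.countP (· ≠ i)) with heven | hodd
      · rw [heven.neg_one_pow, one_smul, ← two_smul K, inv_smul_smul₀ two_ne_zero]
        exact subset_span ⟨l, ⟨hl, Finset.forall_mem_insert _ _ _ |>.2 ⟨heven, hI⟩⟩, rfl⟩
      · rw [hodd.neg_one_pow, neg_one_zsmul, add_neg_cancel, smul_zero]
        exact zero_mem _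
    simpa [hPX] using hP ih

theorem commute_iff_mem_span_one_prod_sort_univ [Fintype σ] (hodd : Odd (Fintype.card σ))
    (he : Pairwise fun i j => e i * e j = -(e j * e i))
    (hsq : ∀ i, e i * e i = algebraMap K A (w i)) (hw : ∀ i, w i ≠ 0)
    (hgen : Algebra.adjoin K (Set.range e) = ⊤) (X : A) :
    (∀ i, Commute (e i) X) ↔
      X ∈ span K {1, ((Finset.univ.sort (· ≤ ·)).map e).prod} := by
  have hsort := (Finset.univ.sortedLT_sort (α := σ)).pairwise
  constructor
  · intro hX
    refine span_mono ?_ (mem_span_orderedMonomials_of_commute he hsq hw hgen hX Finset.univ)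
    rintro _ ⟨l, ⟨hl, hpar⟩, rfl⟩
    rcases List.eq_nil_or_forall_mem_of_even_countP_ne hl.nodup
      (fun i => hpar i (Finset.mem_univ i)) with rfl | hall
    · simp
    · rw [hl.eq_of_mem_iff hsort (by simp [hall])]
      simp
  · intro hX i
    have hps : Commute (e i) ((Finset.univ.sort (· ≤ ·)).map e).prod := by
      rw [Commute, SemiconjBy, mul_prod_map_eq_neg_one_pow_zsmul he,
        hsort.nodup.countP_ne_eq_length_sub_one (by simp), Finset.length_sort, Finset.card_univ,
        (Nat.Odd.sub_odd hodd odd_one).neg_one_pow, one_smul]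
    have hle : span K {1, ((Finset.univ.sort (· ≤ ·)).map e).prod} ≤
        Subalgebra.toSubmodule (Subalgebra.centralizer K {e i}) := span_le.2 <| by
      rintro _ (rfl | rfl)
      · exact one_mem (Subalgebra.centralizer K _)
      · exact (Subalgebra.mem_centralizer_iff K).2 fun _ h => h ▸ hps.eq
    exact (Subalgebra.mem_centralizer_iff K).1 (hle hX) _ rfl

end Centralizer

section PiCliffordAlgebra

variable {K σ : Type*} [CommRing K] [Fintype σ] [DecidableEq σ]

theorem ι_single_mul_self (w : σ → K) (i : σ) :
    ι (QuadraticMap.weightedSumSquares K w) (Pi.single i 1) *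
        ι (QuadraticMap.weightedSumSquares K w) (Pi.single i 1) = algebraMap K _ (w i) := by
  rw [ι_sq_scalar]
  simp [QuadraticMap.weightedSumSquares_apply, Pi.single_apply]

theorem ι_single_anticomm (w : σ → K) :
    Pairwise fun i j : σ =>
      ι (QuadraticMap.weightedSumSquares K w) (Pi.single i 1) *
          ι (QuadraticMap.weightedSumSquares K w) (Pi.single j 1) =
        -(ι (QuadraticMap.weightedSumSquares K w) (Pi.single j 1) *
          ι (QuadraticMap.weightedSumSquares K w) (Pi.single i 1)) := fun i j hij =>
  ι_mul_ι_comm_of_isOrtho <| by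
    rw [QuadraticMap.isOrtho_def]
    simp [QuadraticMap.weightedSumSquares_apply, Pi.single_apply, mul_add,
      Finset.sum_add_distrib, hij, hij.symm, eq_comm]

variable (Q : QuadraticForm K (σ → K))

theorem ι_eq_sum_smul_ι_single (v : σ → K) : ι Q v = ∑ i, v i • ι Q (Pi.single i 1) := by
  rw [(ι Q).pi_apply_eq_sum_univ v]
  refine Finset.sum_congr rfl fun i _ => ?_
  congr 2
  funext j
  simp [Pi.single_apply, eq_comm]

theorem adjoin_range_ι_single :
    Algebra.adjoin K (Set.range fun i : σ => ι Q (Pi.single i 1)) = ⊤ := by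
  rw [eq_top_iff, ← adjoin_range_ι]
  refine Algebra.adjoin_le ?_
  rintro _ ⟨v, rfl⟩
  rw [ι_eq_sum_smul_ι_single]
  exact sum_mem fun i _ => Subalgebra.smul_mem _ (Algebra.subset_adjoin (Set.mem_range_self i)) _

theorem forall_commute_ι_iff (X : CliffordAlgebra Q) :
    (∀ v, Commute (ι Q v) X) ↔ ∀ i, Commute (ι Q (Pi.single i 1)) X :=
  ⟨fun h _ => h _, fun h v => ι_eq_sum_smul_ι_single Q v ▸
    Commute.sum_left _ _ _ fun i _ => (h i).smul_left _⟩

end PiCliffordAlgebra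

theorem cliffSig_ne_zero {p q i : ℕ} (hi : i < p + q) : cliffSig p q i ≠ 0 := by
  unfold cliffSig
  split_ifs <;> norm_num

/-- In non-degenerate `Cl(p,q,0)` with `n = p + q` odd, the centralizer of the grade-1
subspace is the direct sum of the scalars and the grade-`n` subspace. -/
theorem stmt11 (p q : ℕ) (hn : Odd (p + q)) (X : CliffordAlgebra (Qf p q 0)) :
    (∀ v : Fin (p + q + 0) → ℝ, X * ι (Qf p q 0) v = ι (Qf p q 0) v * X) ↔
      ∃ c d : ℝ, X = algebraMap ℝ (CliffordAlgebra (Qf p q 0)) c + d • pseudoscalar p q 0 := by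
  have key := commute_iff_mem_span_one_prod_sort_univ (K := ℝ) (e := gen p q 0)
    (by simpa using hn) (ι_single_anticomm _) (ι_single_mul_self _)
    (fun i => cliffSig_ne_zero i.isLt) (adjoin_range_ι_single _) X
  rw [Fin.sort_univ, mem_span_pair] at key
  calc (∀ v, X * ι (Qf p q 0) v = ι (Qf p q 0) v * X)
      ↔ ∀ v, Commute (ι (Qf p q 0) v) X := forall_congr' fun _ => Commute.symm_iff
    _ ↔ ∀ i, Commute (gen p q 0 i) X := forall_commute_ι_iff _ X
    _ ↔ ∃ c d : ℝ, c • 1 + d • pseudoscalar p q 0 = X := key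
    _ ↔ _ := by simp only [eq_comm (b := X), Algebra.algebraMap_eq_smul_one]
end
end

section
/- In any non-degenerate Clifford algebra Cl(p,q,0), the twisted centralizer of the grade-1 subspace consists exactly of the scalars: if α(X)·ι(v) = ι(v)·X for all vectors v, then X is a scalar, and conversely. -/
open CliffordAlgebra

noncomputable section

section TwistedDerivation

variable {R M : Type*} [CommRing R] [AddCommGroup M] [Module R M] {Q : QuadraticForm R M}

lemma aux_contractLeft_mul (d : Module.Dual R M) (x y : CliffordAlgebra Q) :
    contractLeft (Q := Q) d (x * y)
      = contractLeft (Q := Q) d x * y + involute x * contractLeft (Q := Q) d y := by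
  induction x using CliffordAlgebra.induction generalizing y with
  | algebraMap r =>
      simp [contractLeft_algebraMap_mul, contractLeft_algebraMap, Algebra.smul_def]
  | ι m =>
      simp [contractLeft_ι_mul, contractLeft_ι, involute_ι, Algebra.smul_def,
        sub_eq_add_neg, neg_mul]
  | mul a b ha hb =>
      rw [mul_assoc, ha, hb, ha, map_mul]
      simp only [mul_add, add_mul, mul_assoc]
      abel
  | add a b ha hb =>
      simp only [add_mul, map_add, ha, hb]
      abel

lemma aux_key (v : M) (x : CliffordAlgebra Q) :
    ι Q v * x - involute x * ι Q v
      = contractLeft (Q := Q) (QuadraticMap.polarBilin Q v) x := by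
  induction x using CliffordAlgebra.induction with
  | algebraMap r =>
      simp [Algebra.commutes, contractLeft_algebraMap]
  | ι m =>
      rw [involute_ι, neg_mul, sub_neg_eq_add, ι_mul_ι_add_swap, contractLeft_ι]
      rfl
  | mul a b ha hb =>
      rw [aux_contractLeft_mul, ← ha, ← hb, map_mul]
      simp only [sub_mul, mul_sub, mul_assoc]
      abel
  | add a b ha hb =>
      simp only [map_add, mul_add, add_mul, ← ha, ← hb]
      abel

end TwistedDerivation

section Exterior

variable {n : ℕ}

local notation "Q0" => (0 : QuadraticForm ℝ (Fin n → ℝ))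

def Nop (x : CliffordAlgebra (0 : QuadraticForm ℝ (Fin n → ℝ))) :
    CliffordAlgebra (0 : QuadraticForm ℝ (Fin n → ℝ)) :=
  ∑ i : Fin n, ι Q0 (Pi.single i 1) * contractLeft (Q := Q0) (LinearMap.proj i) x

lemma Nop_eigen (m : ℕ) (x : CliffordAlgebra Q0)
    (hx : x ∈ (LinearMap.range (ι Q0)) ^ m) : Nop x = m • x := by
  induction hx using Submodule.pow_induction_on_left' with
  | algebraMap r => simp [Nop, contractLeft_algebraMap]
  | add x y i hx hy ihx ihy =>
      simp only [Nop, map_add, mul_add, Finset.sum_add_distrib, smul_add] at *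
      rw [ihx, ihy]
  | mem_mul v hv i x hx ih =>
      obtain ⟨w, rfl⟩ := hv
      simp only [Nop, contractLeft_ι_mul] at ih ⊢
      have ortho : ∀ a b : Fin n → ℝ, (Q0).IsOrtho a b := fun a b => by
        simp [QuadraticMap.IsOrtho]
      calc ∑ i : Fin n, ι Q0 (Pi.single i 1) *
              ((LinearMap.proj i : (Fin n → ℝ) →ₗ[ℝ] ℝ) w • x
                - ι Q0 w * contractLeft (Q := Q0) (LinearMap.proj i) x)
          = ∑ i : Fin n, (w i • (ι Q0 (Pi.single i 1) * x)
              + ι Q0 w * (ι Q0 (Pi.single i 1) *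
                  contractLeft (Q := Q0) (LinearMap.proj i) x)) := by
            refine Finset.sum_congr rfl fun i _ => ?_
            rw [mul_sub, ← mul_assoc, ι_mul_ι_comm_of_isOrtho (ortho _ _), neg_mul, mul_assoc]
            simp [mul_smul_comm, sub_neg_eq_add]
      _ = (∑ i : Fin n, w i • ι Q0 (Pi.single i 1)) * x
            + ι Q0 w * ∑ i : Fin n, ι Q0 (Pi.single i 1) *
                contractLeft (Q := Q0) (LinearMap.proj i) x := by
            rw [Finset.sum_add_distrib, Finset.mul_sum, Finset.sum_mul]
            simp [smul_mul_assoc]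
      _ = ι Q0 w * x + ι Q0 w * (i • x) := by
            rw [ih]
            have hw : (∑ i : Fin n, w i • ι Q0 (Pi.single i 1)) = ι Q0 w := by
              simp_rw [← map_smul, ← map_sum]
              congr 1
              ext j
              simp [Pi.single_apply, Finset.sum_ite_eq' Finset.univ j]
            rw [hw]
      _ = (i + 1) • (ι Q0 w * x) := by
            rw [mul_smul_comm, add_smul, one_smul, add_comm]

def Filt (k : ℕ) : Submodule ℝ (CliffordAlgebra (0 : QuadraticForm ℝ (Fin n → ℝ))) :=
  ⨆ i : {j : ℕ // j ≤ k}, (LinearMap.range (ι Q0)) ^ (i : ℕ)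

lemma pow_le_Filt {i k : ℕ} (h : i ≤ k) :
    (LinearMap.range (ι Q0)) ^ i ≤ Filt (n := n) k :=
  le_iSup (fun i : {j : ℕ // j ≤ k} => (LinearMap.range (ι Q0)) ^ (i : ℕ)) ⟨i, h⟩

lemma Filt_mono {k l : ℕ} (h : k ≤ l) : Filt (n := n) k ≤ Filt l :=
  iSup_le fun i => pow_le_Filt (i.2.trans h)

lemma exists_Filt (x : CliffordAlgebra Q0) : ∃ k, x ∈ Filt (n := n) k := by
  have hx : x ∈ ⨆ i : ℕ, (LinearMap.range (ι Q0)) ^ i := by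
    rw [iSup_ι_range_eq_top]; trivial
  induction hx using Submodule.iSup_induction' with
  | mem i x hx => exact ⟨i, pow_le_Filt le_rfl hx⟩
  | zero => exact ⟨0, Submodule.zero_mem _⟩
  | add x y _ _ ihx ihy =>
      obtain ⟨k, hk⟩ := ihx
      obtain ⟨l, hl⟩ := ihy
      exact ⟨max k l, Submodule.add_mem _ (Filt_mono (le_max_left _ _) hk)
        (Filt_mono (le_max_right _ _) hl)⟩

lemma Nop_sub_mem {k : ℕ} {x : CliffordAlgebra Q0} (hx : x ∈ Filt (n := n) (k + 1)) :
    Nop x - (k + 1) • x ∈ Filt (n := n) k := by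
  induction hx using Submodule.iSup_induction' with
  | mem i x hx =>
      rw [Nop_eigen i x hx]
      rcases Nat.lt_or_ge (i : ℕ) (k + 1) with h | h
      · have : (i : ℕ) • x - (k + 1) • x ∈ (LinearMap.range (ι Q0)) ^ (i : ℕ) :=
          Submodule.sub_mem _ (Submodule.smul_mem _ _ hx) (Submodule.smul_mem _ _ hx)
        exact pow_le_Filt (Nat.lt_succ_iff.mp h) this
      · have hi : (i : ℕ) = k + 1 := le_antisymm i.2 h
        rw [hi, sub_self]
        exact Submodule.zero_mem _
  | zero => simpa [Nop] using Submodule.zero_mem _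
  | add x y _ _ ihx ihy =>
      have : Nop (x + y) - (k + 1) • (x + y)
          = (Nop x - (k + 1) • x) + (Nop y - (k + 1) • y) := by
        simp only [Nop, map_add, mul_add, Finset.sum_add_distrib, smul_add]
        abel
      rw [this]
      exact Submodule.add_mem _ ihx ihy

lemma scalar_of_contract (k : ℕ) (x : CliffordAlgebra Q0) (hx : x ∈ Filt (n := n) k)
    (hc : ∀ i : Fin n, contractLeft (Q := Q0) (LinearMap.proj i) x = 0) :
    ∃ r : ℝ, x = algebraMap ℝ _ r := by
  induction k with
  | zero =>
      have : x ∈ (LinearMap.range (ι Q0)) ^ (0 : ℕ) := by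
        refine (iSup_le fun i => ?_ : Filt (n := n) 0 ≤ _) hx
        have : (i : ℕ) = 0 := Nat.le_zero.mp i.2
        rw [this]
      rw [pow_zero] at this
      obtain ⟨r, hr⟩ := Submodule.mem_one.mp this
      exact ⟨r, hr.symm⟩
  | succ k ih =>
      have hNop : Nop x = 0 := by simp [Nop, hc]
      have h1 : -((k + 1 : ℕ) • x) ∈ Filt (n := n) k := by
        have := Nop_sub_mem hx
        rwa [hNop, zero_sub] at this
      have h1' : (((k + 1 : ℕ) : ℝ)) • x ∈ Filt (n := n) k := by
        rw [← Nat.cast_smul_eq_nsmul ℝ] at h1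
        simpa using Submodule.neg_mem _ h1
      have h2 : x ∈ Filt (n := n) k := by
        have h3 := Submodule.smul_mem (Filt (n := n) k) (((k + 1 : ℕ) : ℝ))⁻¹ h1'
        rwa [smul_smul, inv_mul_cancel₀ (by exact_mod_cast Nat.succ_ne_zero k), one_smul] at h3
      exact ih h2

end Exterior

/-- In any non-degenerate `Cl(p,q,0)`, the twisted centralizer of the grade-1 subspace
consists exactly of the scalars. -/
theorem stmt12 (p q : ℕ) (X : CliffordAlgebra (Qf p q 0)) :
    (∀ v : Fin (p + q + 0) → ℝ, involute X * ι (Qf p q 0) v = ι (Qf p q 0) v * X) ↔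
      ∃ c : ℝ, X = algebraMap ℝ (CliffordAlgebra (Qf p q 0)) c := by
  constructor
  · intro H
    -- contractions by polar duals vanish
    have hpol : ∀ v, contractLeft (Q := Qf p q 0)
        (QuadraticMap.polarBilin (Qf p q 0) v) X = 0 := fun v => by
      rw [← aux_key, H v, sub_self]
    -- hence contractions by coordinate duals vanish
    have hproj : ∀ i : Fin (p + q + 0),
        contractLeft (Q := Qf p q 0) (LinearMap.proj i) X = 0 := by
      intro i
      have hlt : (i : ℕ) < p + q := by have := i.isLt; omega
      have hci : cliffSig p q (i : ℕ) * cliffSig p q (i : ℕ) = 1 := by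
        unfold cliffSig
        split_ifs with h1 h2 <;> first | norm_num | (exfalso; omega)
      have hpolar : ∀ w : Fin (p + q + 0) → ℝ,
          QuadraticMap.polar (Qf p q 0) (Pi.single i 1) w
            = 2 * cliffSig p q (i : ℕ) * w i := by
        intro w
        simp only [QuadraticMap.polar, Qf, QuadraticMap.weightedSumSquares_apply,
          smul_eq_mul]
        rw [← Finset.sum_sub_distrib, ← Finset.sum_sub_distrib,
          Finset.sum_eq_single i]
        · simp only [Pi.add_apply, Pi.single_eq_same]
          ring
        · intro j _ hj
          simp only [Pi.add_apply, Pi.single_eq_of_ne hj]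
          ring
        · intro h; exact absurd (Finset.mem_univ i) h
      have hd : (QuadraticMap.polarBilin (Qf p q 0) (Pi.single i 1))
          = (2 * cliffSig p q (i : ℕ)) • (LinearMap.proj i :
              (Fin (p + q + 0) → ℝ) →ₗ[ℝ] ℝ) := by
        ext w
        simp only [LinearMap.comp_apply, LinearMap.single_apply,
          QuadraticMap.polarBilin_apply_apply, LinearMap.smul_apply,
          LinearMap.proj_apply, smul_eq_mul, hpolar]
      have h0 := hpol (Pi.single i 1)
      rw [hd, map_smul, LinearMap.smul_apply] at h0
      have h2 : (2 * cliffSig p q (i : ℕ)) ≠ 0 := by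
        intro h
        rw [mul_comm] at h
        have : cliffSig p q (i : ℕ) = 0 := by
          rcases mul_eq_zero.mp h with h' | h'
          · exact h'
          · norm_num at h'
        rw [this] at hci; norm_num at hci
      have := smul_eq_zero.mp h0
      tauto
    -- transfer to the exterior algebra
    letI : Invertible (2 : ℝ) := invertibleOfNonzero two_ne_zero
    set x' := equivExterior (Qf p q 0) X with hx'def
    have hx' : ∀ i : Fin (p + q + 0),
        contractLeft (Q := (0 : QuadraticForm ℝ (Fin (p + q + 0) → ℝ)))
          (LinearMap.proj i) x' = 0 := by
      intro i
      rw [hx'def, equivExterior, changeFormEquiv_apply, ← changeForm_contractLeft,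
        hproj i, map_zero]
    obtain ⟨k, hk⟩ := exists_Filt x'
    obtain ⟨r, hr⟩ := scalar_of_contract k x' hk hx'
    refine ⟨r, (equivExterior (Qf p q 0)).injective ?_⟩
    rw [← hx'def, hr]
    simp [equivExterior, changeFormEquiv_apply, changeForm_algebraMap]
  · rintro ⟨c, rfl⟩ v
    rw [AlgHom.commutes]
    exact Algebra.commutes c _
end
end

section
/- Let Cl(p,q,r) be a (possibly degenerate) Clifford algebra with n = p+q+r. The twisted centralizer of the grade-1 subspace equals Λ_r, the subalgebra generated by the null generators: α(X)·ι(v) = ι(v)·X for all vectors v if and only if X lies in the subalgebra generated by the r generators that square to zero. -/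
/-!
The set of `x` with `α x * ι v = ι v * x` is a subalgebra, and it contains `ι w` whenever
`w ⊥ v`; since the null generators are orthogonal to every vector, `Λ_r` twisted-commutes
with every vector. Conversely, if `e` is a non-null basis vector orthogonal to a set `T` of
vectors, every element of the algebra generated by `e` and `T` has the form `a + e * b`
with `a, b` generated by `T` alone, and twisted-commuting with `e` forces `2 Q(e) b = 0`,
i.e. `b = 0`. Stripping off the non-null generators one at a time lands `x` in `Λ_r`.
-/

open CliffordAlgebra

noncomputable section

namespace QuadraticMap

variable {n R : Type*} [Fintype n] [DecidableEq n] [CommRing R]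

theorem isOrtho_weightedSumSquares_single_s13 (w : n → R) {i : n} {y : n → R} (h : w i * y i = 0) :
    (weightedSumSquares R w).IsOrtho (Pi.single i 1) y := by
  simp only [isOrtho_def, weightedSumSquares_apply, ← Finset.sum_add_distrib]
  refine Finset.sum_congr rfl fun j _ => ?_
  rcases eq_or_ne j i with rfl | hj
  · simp only [Pi.add_apply, Pi.single_eq_same, smul_eq_mul]
    linear_combination 2 * h
  · simp [hj]

theorem weightedSumSquares_single (w : n → R) (i : n) :
    weightedSumSquares R w (Pi.single i 1) = w i := by
  rw [weightedSumSquares_apply, Finset.sum_eq_single i (fun j _ hj => by simp [hj]) (by simp)]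
  simp

end QuadraticMap

namespace CliffordAlgebra

variable {R M : Type*} [CommRing R] [AddCommGroup M] [Module R M] {Q : QuadraticForm R M}

variable (Q) in
def twistedCentralizer (v : M) : Subalgebra R (CliffordAlgebra Q) where
  carrier := {x | involute x * ι Q v = ι Q v * x}
  mul_mem' {x y} hx hy := by
    simp only [Set.mem_ofPred_eq, map_mul] at *
    rw [mul_assoc, hy, ← mul_assoc, hx, mul_assoc]
  add_mem' {x y} hx hy := by
    simp only [Set.mem_ofPred_eq, map_add, add_mul, mul_add] at *
    rw [hx, hy]
  algebraMap_mem' c := by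
    simp only [Set.mem_ofPred_eq, AlgHom.commutes]
    exact Algebra.commutes c _

theorem mem_twistedCentralizer {v : M} {x : CliffordAlgebra Q} :
    x ∈ twistedCentralizer Q v ↔ involute x * ι Q v = ι Q v * x := Iff.rfl

theorem adjoin_ι_le_twistedCentralizer {v : M} {T : Set M} (hT : ∀ w ∈ T, Q.IsOrtho v w) :
    Algebra.adjoin R (ι Q '' T) ≤ twistedCentralizer Q v := by
  rw [Algebra.adjoin_le_iff]
  rintro _ ⟨w, hw, rfl⟩
  rw [SetLike.mem_coe, mem_twistedCentralizer, involute_ι, neg_mul,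
    ι_mul_ι_comm_of_isOrtho (hT w hw)]

theorem exists_eq_add_ι_mul_of_mem_adjoin_insert {v : M} {T : Set M}
    (hT : ∀ w ∈ T, Q.IsOrtho v w) {x : CliffordAlgebra Q}
    (hx : x ∈ Algebra.adjoin R (ι Q '' insert v T)) :
    ∃ a ∈ Algebra.adjoin R (ι Q '' T), ∃ b ∈ Algebra.adjoin R (ι Q '' T),
      x = a + ι Q v * b := by
  set B := Algebra.adjoin R (ι Q '' T)
  suffices h : ∀ y, (∃ a ∈ B, ∃ b ∈ B, y = a + ι Q v * b) →
      ∃ a ∈ B, ∃ b ∈ B, x * y = a + ι Q v * b by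
    simpa using h 1 ⟨1, one_mem B, 0, zero_mem B, by simp⟩
  induction hx using Algebra.adjoin_induction with
  | mem z hz =>
    rintro _ ⟨a, ha, b, hb, rfl⟩
    obtain ⟨w, hw, rfl⟩ := hz
    rcases hw with rfl | hwT
    · refine ⟨algebraMap R _ (Q w) * b, mul_mem (Subalgebra.algebraMap_mem B _) hb, a, ha, ?_⟩
      rw [mul_add, ← mul_assoc, ι_sq_scalar, add_comm]
    · have hwB : ι Q w ∈ B := Algebra.subset_adjoin ⟨w, hwT, rfl⟩
      refine ⟨ι Q w * a, mul_mem hwB ha, -(ι Q w * b), neg_mem (mul_mem hwB hb), ?_⟩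
      rw [mul_add, ← mul_assoc, mul_neg, ← mul_assoc, ι_mul_ι_comm_of_isOrtho (hT w hwT),
        neg_mul, neg_neg]
  | algebraMap c =>
    rintro _ ⟨a, ha, b, hb, rfl⟩
    refine ⟨algebraMap R _ c * a, mul_mem (Subalgebra.algebraMap_mem B _) ha,
      algebraMap R _ c * b, mul_mem (Subalgebra.algebraMap_mem B _) hb, ?_⟩
    rw [mul_add, ← mul_assoc, ← mul_assoc, Algebra.commutes c (ι Q v)]
  | add x₁ x₂ _ _ h₁ h₂ =>
    intro y hy
    obtain ⟨a₁, ha₁, b₁, hb₁, e₁⟩ := h₁ y hy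
    obtain ⟨a₂, ha₂, b₂, hb₂, e₂⟩ := h₂ y hy
    refine ⟨a₁ + a₂, add_mem ha₁ ha₂, b₁ + b₂, add_mem hb₁ hb₂, ?_⟩
    rw [add_mul, e₁, e₂]
    noncomm_ring
  | mul x₁ x₂ _ _ h₁ h₂ =>
    intro y hy
    rw [mul_assoc]
    exact h₁ _ (h₂ y hy)

theorem mem_adjoin_of_mem_adjoin_insert_of_mem_twistedCentralizer {v : M} {T : Set M}
    (hv : IsUnit (2 * Q v)) (hT : ∀ w ∈ T, Q.IsOrtho v w) {x : CliffordAlgebra Q}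
    (hx : x ∈ Algebra.adjoin R (ι Q '' insert v T)) (hxv : x ∈ twistedCentralizer Q v) :
    x ∈ Algebra.adjoin R (ι Q '' T) := by
  obtain ⟨a, ha, b, hb, rfl⟩ := exists_eq_add_ι_mul_of_mem_adjoin_insert hT hx
  have hT' := adjoin_ι_le_twistedCentralizer hT
  have hQb : algebraMap R _ (2 * Q v) * b = 0 := by
    rw [mem_twistedCentralizer, map_add, map_mul, involute_ι, add_mul, mul_assoc, hT' ha,
      hT' hb, neg_mul, ← mul_assoc, ι_sq_scalar, mul_add, ← mul_assoc, ι_sq_scalar,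
      add_right_inj, neg_eq_iff_add_eq_zero] at hxv
    rwa [map_mul, map_ofNat, two_mul, add_mul]
  rw [(hv.map (algebraMap R _)).mul_right_eq_zero.1 hQb, mul_zero, add_zero]
  exact ha

theorem adjoin_ι_range_basis_eq_top {κ : Type*} (b : Module.Basis κ R M) :
    Algebra.adjoin R (ι Q '' Set.range b) = ⊤ := by
  rw [eq_top_iff, ← adjoin_range_ι, Algebra.adjoin_le_iff]
  rintro _ ⟨v, rfl⟩
  have hv : ι Q v ∈ (Submodule.span R (Set.range b)).map (ι Q) := by
    rw [b.span_eq]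
    exact Submodule.mem_map_of_mem Submodule.mem_top
  rw [Submodule.map_span] at hv
  exact Algebra.span_le_adjoin R _ hv

end CliffordAlgebra

section Diagonal

open CliffordAlgebra QuadraticMap

variable {n R : Type*} [Fintype n] [DecidableEq n] [CommRing R] {w : n → R}

theorem mem_adjoin_null_of_forall_mem_twistedCentralizer
    (hw : ∀ i, w i = 0 ∨ IsUnit (2 * w i)) {x : CliffordAlgebra (weightedSumSquares R w)}
    (hx : ∀ v, x ∈ twistedCentralizer (weightedSumSquares R w) v) (S : Finset n)
    (hS : x ∈ Algebra.adjoin R (ι _ '' (Pi.basisFun R n '' (↑S ∪ {i | w i = 0})))) :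
    x ∈ Algebra.adjoin R (ι _ '' (Pi.basisFun R n '' {i | w i = 0})) := by
  induction S using Finset.induction_on with
  | empty => simpa using hS
  | insert i S hiS ih =>
    apply ih
    by_cases hi : w i = 0
    · rwa [Finset.coe_insert, Set.insert_union,
        Set.insert_eq_of_mem (Set.mem_union_right (↑S) (show i ∈ {i | w i = 0} from hi))] at hS
    · rw [Finset.coe_insert, Set.insert_union, Set.image_insert_eq] at hS
      refine mem_adjoin_of_mem_adjoin_insert_of_mem_twistedCentralizer ?_ ?_ hS (hx _)
      · rw [Pi.basisFun_apply, weightedSumSquares_single]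
        exact (hw i).resolve_left hi
      · rintro _ ⟨j, hj, rfl⟩
        have hji : j ≠ i := by
          rintro rfl
          rcases hj with hj | hj
          · exact hiS hj
          · exact hi hj
        rw [Pi.basisFun_apply, Pi.basisFun_apply]
        exact isOrtho_weightedSumSquares_single_s13 w (by simp [hji])

theorem forall_mem_twistedCentralizer_iff_mem_adjoin_null
    (hw : ∀ i, w i = 0 ∨ IsUnit (2 * w i)) (x : CliffordAlgebra (weightedSumSquares R w)) :
    (∀ v, x ∈ twistedCentralizer (weightedSumSquares R w) v) ↔
      x ∈ Algebra.adjoin R (ι _ '' (Pi.basisFun R n '' {i | w i = 0})) := by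
  refine ⟨fun hx => mem_adjoin_null_of_forall_mem_twistedCentralizer hw hx Finset.univ ?_,
    fun hx v => adjoin_ι_le_twistedCentralizer ?_ hx⟩
  · rw [Finset.coe_univ, Set.univ_union, Set.image_univ, adjoin_ι_range_basis_eq_top]
    trivial
  · rintro _ ⟨j, hj, rfl⟩
    rw [isOrtho_comm, Pi.basisFun_apply]
    exact isOrtho_weightedSumSquares_single_s13 w (by rw [show w j = 0 from hj, zero_mul])

end Diagonal

theorem cliffSig_eq_zero_iff (p q i : ℕ) : cliffSig p q i = 0 ↔ p + q ≤ i := by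
  unfold cliffSig
  split_ifs <;> norm_num <;> omega

theorem cliffSig_eq_zero_or_isUnit_two_mul (p q i : ℕ) :
    cliffSig p q i = 0 ∨ IsUnit (2 * cliffSig p q i) := by
  unfold cliffSig
  split_ifs <;> norm_num

theorem LambdaR_eq_adjoin_null (p q r : ℕ) :
    LambdaR p q r = Algebra.adjoin ℝ
      (ι (Qf p q r) '' (Pi.basisFun ℝ _ '' {i | cliffSig p q (i : ℕ) = 0})) := by
  rw [LambdaR, Set.image_image]
  congr 1
  ext x
  simp [cliffSig_eq_zero_iff, gen, eq_comm]

/-- In `Cl(p,q,r)`, the twisted centralizer of the grade-1 subspace equals `Λ_r`, the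
subalgebra generated by the null generators. -/
theorem stmt13 (p q r : ℕ) (X : CliffordAlgebra (Qf p q r)) :
    (∀ v : Fin (p + q + r) → ℝ, involute X * ι (Qf p q r) v = ι (Qf p q r) v * X) ↔
      X ∈ LambdaR p q r := by
  rw [LambdaR_eq_adjoin_null]
  exact forall_mem_twistedCentralizer_iff_mem_adjoin_null
    (w := fun i : Fin (p + q + r) => cliffSig p q i)
    (fun i => cliffSig_eq_zero_or_isUnit_two_mul p q i) X
end
end
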